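/- Let n ≥ 1, let R_1, …, R_n and H_1, …, H_n be strictly positive real numbers, fix k ∈ {1,…,n}, and let π_0, π_1, …, π_n and v_{00}, v_{01}, v_{10}, v_{11}, …, v_{n0}, v_{n1} be real numbers satisfying: (i) π_0 + ∑_{j=1}^{n} π_j = 1; (ii) v_{j1}·H_j = R_j·v_{01} for every j ≠ k; (iii) v_{01}·(∑_{j=1}^{n} R_j) = ∑_{j=1, j≠k}^{n} H_j·v_{j1}; (iv) v_{k1}·H_k = π_k + R_k·v_{01}; (v) v_{q0}·H_q = π_q + R_q·v_{00} for every q ∈ {1,…,n}; and (vi) v_{00}·(∑_{j=1}^{n} R_j) = π_0 + ∑_{j=1, j≠k}^{n} H_j·v_{j0} + H_k·v_{k1}. Then v_{00} = 1/R_k. -/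

import Mathlib

/-!
Equations (ii) and (iii) say that the flow `v01 * ∑ R` out of the idle state is returned only
by the links `j ≠ k`, which carry back exactly `R j * v01` each; the missing share `R k * v01`
must vanish, so `v01 = 0` and (iv) becomes `H k * v1 k = π k`. Substituting (v) and this into
(vi), the probabilities add up to `1` by (i) and the terms `R j * v00`, `j ≠ k`, cancel,
leaving `v00 * R k = 1`.
-/

open Finset

section Balance

variable {ι : Type*} [Fintype ι] [DecidableEq ι]

theorem Finset.sum_filter_ne_eq_sub {M : Type*} [AddCommGroup M] (f : ι → M) (k : ι) :
    ∑ j ∈ univ.filter (· ≠ k), f j = ∑ j, f j - f k := by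
  rw [filter_ne', sum_erase_eq_sub (mem_univ k)]

theorem eq_zero_of_balance_missing_term {𝕜 : Type*} [Field 𝕜] (R H v : ι → 𝕜) (k : ι) (x : 𝕜)
    (hRk : R k ≠ 0) (hv : ∀ j, j ≠ k → v j * H j = R j * x)
    (hbal : x * ∑ j, R j = ∑ j ∈ univ.filter (· ≠ k), H j * v j) :
    x = 0 := by
  have hreturn : ∑ j ∈ univ.filter (· ≠ k), H j * v j = (∑ j, R j - R k) * x := by
    rw [← sum_filter_ne_eq_sub, sum_mul]
    refine sum_congr rfl fun j hj => ?_
    rw [mul_comm, hv j (mem_filter.mp hj).2]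
  have : R k * x = 0 := by linear_combination hreturn + hbal
  exact (mul_eq_zero.mp this).resolve_left hRk

theorem mul_eq_one_of_balance {α : Type*} [CommRing α] (R H π v : ι → α) (k : ι) (π0 x : α)
    (hprob : π0 + ∑ j, π j = 1) (hv : ∀ j, j ≠ k → v j * H j = π j + R j * x)
    (hbal : x * ∑ j, R j = π0 + ∑ j ∈ univ.filter (· ≠ k), H j * v j + π k) :
    x * R k = 1 := by
  have hreturn : ∑ j ∈ univ.filter (· ≠ k), H j * v j
      = (∑ j, π j - π k) + (∑ j, R j - R k) * x := by
    rw [← sum_filter_ne_eq_sub, ← sum_filter_ne_eq_sub, sum_mul, ← sum_add_distrib]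
    refine sum_congr rfl fun j hj => ?_
    rw [mul_comm, hv j (mem_filter.mp hj).2]
  linear_combination hprob + hbal + hreturn

end Balance

theorem shs_v00_eq_inv_Rk_general (n : ℕ) (R H : Fin n → ℝ)
    (hR : ∀ j, 0 < R j) (k : Fin n)
    (π0 : ℝ) (π : Fin n → ℝ) (v00 v01 : ℝ) (v0 v1 : Fin n → ℝ)
    (hprob : π0 + ∑ j, π j = 1)
    (h16 : ∀ j, j ≠ k → v1 j * H j = R j * v01)
    (h14 : v01 * (∑ j, R j) = ∑ j ∈ Finset.univ.filter (· ≠ k), H j * v1 j)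
    (h17 : v1 k * H k = π k + R k * v01)
    (h15 : ∀ q, v0 q * H q = π q + R q * v00)
    (h13 : v00 * (∑ j, R j) =
      π0 + (∑ j ∈ Finset.univ.filter (· ≠ k), H j * v0 j) + H k * v1 k) :
    v00 = 1 / R k := by
  have hv01 : v01 = 0 := eq_zero_of_balance_missing_term R H v1 k v01 (hR k).ne' h16 h14
  have hk : H k * v1 k = π k := by rw [mul_comm, h17, hv01, mul_zero, add_zero]
  rw [hk] at h13
  exact eq_one_div_of_mul_eq_one_left
    (mul_eq_one_of_balance R H π v0 k π0 v00 hprob (fun q _ => h15 q) h13)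

/-- Solving the SHS steady-state equations (13)–(17) for link `k`
yields `v_{00} = 1/R_k`. -/
theorem shs_v00_eq_inv_Rk (n : ℕ) (hn : 1 ≤ n) (R H : Fin n → ℝ)
    (hR : ∀ j, 0 < R j) (hH : ∀ j, 0 < H j) (k : Fin n)
    (π0 : ℝ) (π : Fin n → ℝ) (v00 v01 : ℝ) (v0 v1 : Fin n → ℝ)
    (hprob : π0 + ∑ j, π j = 1)
    (h16 : ∀ j, j ≠ k → v1 j * H j = R j * v01)
    (h14 : v01 * (∑ j, R j) = ∑ j ∈ Finset.univ.filter (· ≠ k), H j * v1 j)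
    (h17 : v1 k * H k = π k + R k * v01)
    (h15 : ∀ q, v0 q * H q = π q + R q * v00)
    (h13 : v00 * (∑ j, R j) =
      π0 + (∑ j ∈ Finset.univ.filter (· ≠ k), H j * v0 j) + H k * v1 k) :
    v00 = 1 / R k :=
  shs_v00_eq_inv_Rk_general n R H hR k π0 π v00 v01 v0 v1 hprob h16 h14 h17 h15 h13
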